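/- If G is a graph with divisorial gonality gon(G) = 3, then (1) the genus of G satisfies g(G) ≥ 3, and (2) either the edge-connectivity of G satisfies η(G) ≤ 3, or |V(G)| = 3. -/

import Mathlib

/-- A finite loopless multigraph: a finite vertex type, a finite edge type,
and an assignment of an unordered pair of distinct endpoints to each edge. -/
structure Multigraph where
  V : Type
  E : Type
  [fintypeV : Fintype V]
  [fintypeE : Fintype E]
  [decEqV : DecidableEq V]
  ends : E → Sym2 V
  loopless : ∀ e, ¬ (ends e).IsDiag

attribute [instance] Multigraph.fintypeV Multigraph.fintypeE Multigraph.decEqV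

namespace Multigraph

/-- The graph obtained by deleting the edges in `W` is connected (finite graphs are
connected iff the vertex set is nonempty and every nonempty proper vertex subset
has an edge leaving it). -/
def ConnectedWithout (G : Multigraph) (W : Set G.E) : Prop :=
  Nonempty G.V ∧
    ∀ A : Finset G.V, A.Nonempty → A ≠ Finset.univ →
      ∃ e, e ∉ W ∧ ∃ u v, G.ends e = s(u, v) ∧ u ∈ A ∧ v ∉ A

/-- `G` is connected. -/
def Connected (G : Multigraph) : Prop := G.ConnectedWithout ∅

/-- `G` is `k`-edge-connected: deleting any set of at most `k - 1` edges
leaves a connected graph. -/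
def EdgeConnected (G : Multigraph) (k : ℕ) : Prop :=
  ∀ W : Finset G.E, W.card < k → G.ConnectedWithout ↑W

/-- An edge is a bridge if deleting it disconnects the graph. -/
def IsBridge (G : Multigraph) (e : G.E) : Prop := ¬ G.ConnectedWithout {e}

/-- The graph obtained by deleting the vertices in `U` (and all incident edges)
is connected. -/
def ConnectedAvoiding (G : Multigraph) (U : Set G.V) : Prop :=
  (∃ v, v ∉ U) ∧
    ∀ A : Finset G.V, A.Nonempty → (∀ a ∈ A, a ∉ U) → (∃ w, w ∉ U ∧ w ∉ A) →
      ∃ e u v, G.ends e = s(u, v) ∧ u ∈ A ∧ v ∉ A ∧ v ∉ U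

/-- `G` is `k`-vertex-connected: deleting any set of at most `k - 1` vertices
leaves a connected graph. -/
def VertexConnected (G : Multigraph) (k : ℕ) : Prop :=
  ∀ U : Finset G.V, U.card < k → G.ConnectedAvoiding ↑U

/-- `G` is simple: no two distinct edges have the same pair of endpoints. -/
def Simple (G : Multigraph) : Prop :=
  ∀ e e' : G.E, G.ends e = G.ends e' → e = e'

/-- The genus `g(G) = |E| - |V| + 1`. -/
def genus (G : Multigraph) : ℤ :=
  (Fintype.card G.E : ℤ) - (Fintype.card G.V : ℤ) + 1

/-- A tree is a connected graph of genus 0. -/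
def IsTree (G : Multigraph) : Prop := G.Connected ∧ G.genus = 0

/-- The number of edges joining `u` and `v`. -/
noncomputable def numEdges (G : Multigraph) (u v : G.V) : ℕ :=
  Set.ncard {e : G.E | G.ends e = s(u, v)}

/-- The valence of a vertex: the number of incident edges. -/
noncomputable def valence (G : Multigraph) (v : G.V) : ℕ :=
  Set.ncard {e : G.E | v ∈ G.ends e}

/-- A divisor on `G`: an element of the free abelian group on `V(G)`. -/
abbrev Divisor (G : Multigraph) : Type := G.V → ℤ

/-- The degree of a divisor: the sum of its coefficients. -/
def degree (G : Multigraph) (D : G.Divisor) : ℤ := ∑ v, D v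

/-- A divisor is effective if all its coefficients are nonnegative. -/
def Effective (G : Multigraph) (D : G.Divisor) : Prop := ∀ v, 0 ≤ D v

/-- The Laplacian of `G` applied to an integer vector `f`. -/
noncomputable def laplacian (G : Multigraph) (f : G.V → ℤ) : G.Divisor :=
  fun v => ∑ w, (G.numEdges v w : ℤ) * (f v - f w)

/-- Linear equivalence of divisors: the difference is in the image of the Laplacian. -/
def LinEquiv (G : Multigraph) (D D' : G.Divisor) : Prop :=
  ∃ f : G.V → ℤ, D - D' = G.laplacian f

/-- `D - F` is equivalent to an effective divisor for every effective `F` of degree `k`. -/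
def RankGe (G : Multigraph) (D : G.Divisor) (k : ℤ) : Prop :=
  ∀ F : G.Divisor, G.Effective F → G.degree F = k →
    ∃ E' : G.Divisor, G.Effective E' ∧ G.LinEquiv (D - F) E'

/-- The Baker–Norine rank of a divisor. -/
noncomputable def rank (G : Multigraph) (D : G.Divisor) : ℤ :=
  sSup {r : ℤ | r = -1 ∨ (0 ≤ r ∧ G.RankGe D r)}

/-- The (divisorial) gonality of `G`: the minimum degree of an effective divisor
of rank at least 1. -/
noncomputable def gonality (G : Multigraph) : ℕ :=
  sInf {n : ℕ | ∃ D : G.Divisor, G.Effective D ∧ G.degree D = (n : ℤ) ∧ 1 ≤ G.rank D}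

end Multigraph

/-- A morphism of multigraphs: vertices map to vertices, and each edge maps either
to an edge joining the images of its endpoints (if they are distinct) or to the
common image of its endpoints. -/
structure Morphism (G G' : Multigraph) where
  vertexMap : G.V → G'.V
  edgeMap : G.E → G'.E ⊕ G'.V
  map_edge_of_eq : ∀ e u v, G.ends e = s(u, v) → vertexMap u = vertexMap v →
    edgeMap e = Sum.inr (vertexMap u)
  map_edge_of_ne : ∀ e u v, G.ends e = s(u, v) → vertexMap u ≠ vertexMap v →
    ∃ e', edgeMap e = Sum.inl e' ∧ G'.ends e' = s(vertexMap u, vertexMap v)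

namespace Morphism

variable {G G' : Multigraph}

/-- The multiplicity `m_φ(v)` of `φ` at `v` with respect to an edge `e'` of `G'`. -/
noncomputable def mult (φ : Morphism G G') (v : G.V) (e' : G'.E) : ℕ :=
  Set.ncard {e : G.E | v ∈ G.ends e ∧ φ.edgeMap e = Sum.inl e'}

/-- `φ` is harmonic if `m_φ(v)` does not depend on the chosen edge `e'`
incident to `φ(v)`. -/
def Harmonic (φ : Morphism G G') : Prop :=
  ∀ (v : G.V) (e₁ e₂ : G'.E),
    φ.vertexMap v ∈ G'.ends e₁ → φ.vertexMap v ∈ G'.ends e₂ →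
      φ.mult v e₁ = φ.mult v e₂

/-- `φ` is non-degenerate if `m_φ(v) > 0` for every vertex `v`. -/
def Nondegenerate (φ : Morphism G G') : Prop :=
  ∀ (v : G.V) (e' : G'.E), φ.vertexMap v ∈ G'.ends e' → 0 < φ.mult v e'

/-- `φ` has degree `d`: every edge of `G'` has exactly `d` preimages. -/
def HasDegree (φ : Morphism G G') (d : ℕ) : Prop :=
  Nonempty G'.E ∧ ∀ e' : G'.E, Set.ncard {e : G.E | φ.edgeMap e = Sum.inl e'} = d

end Morphism

/-!
Gonality at most `2` in genus at most `2`: by Riemann's inequality (every divisor of degree at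
least `g` is equivalent to an effective one) the divisor `2q` has rank `1` when `g ≤ 1`. When
`g = 2` the canonical divisor has degree `2` and rank `1`: a `q`-reduced representative of `K`
either has a chip at `q`, or equals `ν - 1 + q` for the acyclic orientation `ν` found by Dhar's
burning algorithm, and then the reversed orientation gives `ν' - 1 ~ q`, which is impossible
because the divisor `ν' - 1` of an acyclic orientation is never equivalent to an effective one.

Edge-connectivity: if `D` has degree `3` and rank `1` and `|V| ≥ 4`, then `D q = 0` for some `q`,
and `D - q = E + Δf` with `E` effective. Summing over the set where `f` is maximal, the Laplacian
counts at least the edges leaving that set, while `D - q - E` sums to at most `3` there.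
-/

namespace Multigraph

open Finset

variable {G : Multigraph}

section Edges

variable (G)

lemma numEdges_eq_card (u v : G.V) :
    G.numEdges u v = #{e | G.ends e = s(u, v)} := by
  rw [numEdges, ← Set.ncard_coe_finset]
  congr 1
  ext e
  simp

lemma numEdges_comm (u v : G.V) : G.numEdges u v = G.numEdges v u := by
  rw [numEdges, Sym2.eq_swap, ← numEdges]

lemma ne_of_ends_eq {e : G.E} {u v : G.V} (h : G.ends e = s(u, v)) : u ≠ v := by
  rintro rfl
  exact G.loopless e (h ▸ Sym2.mk_isDiag_iff.mpr rfl)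

lemma numEdges_self (v : G.V) : G.numEdges v v = 0 := by
  rw [numEdges_eq_card, card_eq_zero, filter_eq_empty_iff]
  exact fun e _ h => G.ne_of_ends_eq h rfl

lemma one_le_numEdges {e : G.E} {u v : G.V} (h : G.ends e = s(u, v)) :
    1 ≤ G.numEdges u v := by
  rw [numEdges_eq_card, Nat.one_le_iff_ne_zero, ← pos_iff_ne_zero, card_pos]
  exact ⟨e, by simp [h]⟩

def edgesJoining (P : Finset (G.V × G.V)) : Finset G.E :=
  {e | ∃ p ∈ P, G.ends e = s(p.1, p.2)}

lemma card_edgesJoining {P : Finset (G.V × G.V)} (hP : ∀ p ∈ P, p.swap ∉ P) :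
    #(G.edgesJoining P) = ∑ p ∈ P, G.numEdges p.1 p.2 := by
  classical
  have hbiUnion : G.edgesJoining P = P.biUnion fun p => {e | G.ends e = s(p.1, p.2)} := by
    ext e
    simp [edgesJoining]
  rw [hbiUnion, card_biUnion]
  · simp only [numEdges_eq_card]
  intro p hp p' hp' hne
  simp only [Function.onFun, disjoint_left, mem_filter, mem_univ, true_and]
  intro e he he'
  rcases Sym2.eq_iff.mp (he.symm.trans he') with ⟨h1, h2⟩ | ⟨h1, h2⟩
  · exact hne (Prod.ext h1 h2)
  · exact hP p hp (by rwa [show p.swap = p' from Prod.ext h2 h1])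

end Edges

section Laplacian

lemma laplacian_add (f g : G.V → ℤ) :
    G.laplacian (f + g) = G.laplacian f + G.laplacian g := by
  ext v
  simp only [laplacian, Pi.add_apply, ← sum_add_distrib]
  exact sum_congr rfl fun w _ => by ring

lemma laplacian_smul (c : ℤ) (f : G.V → ℤ) : G.laplacian (c • f) = c • G.laplacian f := by
  ext v
  simp only [laplacian, Pi.smul_apply, smul_eq_mul, mul_sum]
  exact sum_congr rfl fun w _ => by ring

lemma laplacian_neg (f : G.V → ℤ) : G.laplacian (-f) = -G.laplacian f := by
  simpa using laplacian_smul (-1) f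

lemma laplacian_zero : G.laplacian 0 = 0 := by
  ext v
  simp [laplacian]

/-- An edge inside `A` contributes opposite amounts at its two ends. -/
lemma sum_laplacian (A : Finset G.V) (f : G.V → ℤ) :
    ∑ v ∈ A, G.laplacian f v = ∑ v ∈ A, ∑ w ∈ Aᶜ, (G.numEdges v w : ℤ) * (f v - f w) := by
  have hinside : ∑ v ∈ A, ∑ w ∈ A, (G.numEdges v w : ℤ) * (f v - f w) = 0 := by
    have hswap := sum_comm (s := A) (t := A) (f := fun v w => (G.numEdges v w : ℤ) * (f v - f w))
    have hanti : ∑ w ∈ A, ∑ v ∈ A, (G.numEdges v w : ℤ) * (f v - f w)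
        = -∑ w ∈ A, ∑ v ∈ A, (G.numEdges w v : ℤ) * (f w - f v) := by
      simp only [← sum_neg_distrib, G.numEdges_comm]
      exact sum_congr rfl fun _ _ => sum_congr rfl fun _ _ => by ring
    linarith
  simp only [laplacian, ← sum_add_sum_compl A, sum_add_distrib, hinside, zero_add]

lemma laplacian_indicator_of_mem (A : Finset G.V) {v : G.V} (hv : v ∈ A) :
    G.laplacian (fun w => if w ∈ A then 1 else 0) v = ∑ w ∈ Aᶜ, (G.numEdges v w : ℤ) := by
  rw [laplacian, ← sum_add_sum_compl A, sum_eq_zero fun w hw => by simp [hv, hw], zero_add]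
  exact sum_congr rfl fun w hw => by simp [hv, mem_compl.mp hw]

lemma laplacian_indicator_of_notMem (A : Finset G.V) {v : G.V} (hv : v ∉ A) :
    G.laplacian (fun w => if w ∈ A then 1 else 0) v = -∑ w ∈ A, (G.numEdges v w : ℤ) := by
  rw [laplacian, ← sum_add_sum_compl A, sum_eq_zero (s := Aᶜ) fun w hw => by
    simp [hv, mem_compl.mp hw], add_zero, ← sum_neg_distrib]
  exact sum_congr rfl fun w hw => by simp [hv, hw]

lemma sum_numEdges_le_laplacian {f : G.V → ℤ} {u : G.V} (hu : ∀ w, f w ≤ f u) :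
    ∑ w ∈ univ.filter (fun w => f w < f u), (G.numEdges u w : ℤ) ≤ G.laplacian f u := by
  rw [sum_filter, laplacian]
  refine sum_le_sum fun w _ => ?_
  split_ifs with hw
  · exact le_mul_of_one_le_right (by positivity) (by omega)
  · exact mul_nonneg (by positivity) (by linarith [hu w])

end Laplacian

section Divisors

lemma degree_add (D D' : G.Divisor) : G.degree (D + D') = G.degree D + G.degree D' :=
  sum_add_distrib

lemma degree_sub (D D' : G.Divisor) : G.degree (D - D') = G.degree D - G.degree D' :=
  sum_sub_distrib ..

lemma degree_single (q : G.V) (c : ℤ) : G.degree (Pi.single q c) = c := by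
  simp [degree]

lemma degree_one : G.degree 1 = Fintype.card G.V := by
  simp [degree]

lemma degree_laplacian (f : G.V → ℤ) : G.degree (G.laplacian f) = 0 := by
  simpa [degree] using sum_laplacian univ f

lemma effective_single (q : G.V) {c : ℤ} (hc : 0 ≤ c) : G.Effective (Pi.single q c) := by
  intro v
  by_cases hv : v = q
  · simpa [hv] using hc
  · simp [hv]

lemma Effective.add {D D' : G.Divisor} (hD : G.Effective D) (hD' : G.Effective D') :
    G.Effective (D + D') :=
  fun v => add_nonneg (hD v) (hD' v)

lemma Effective.degree_nonneg {D : G.Divisor} (hD : G.Effective D) : 0 ≤ G.degree D :=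
  sum_nonneg fun v _ => hD v

lemma Effective.sum_le_degree {D : G.Divisor} (hD : G.Effective D) (A : Finset G.V) :
    ∑ v ∈ A, D v ≤ G.degree D :=
  sum_le_sum_of_subset_of_nonneg (subset_univ A) fun v _ _ => hD v

lemma Effective.apply_le_degree {D : G.Divisor} (hD : G.Effective D) (v : G.V) :
    D v ≤ G.degree D := by
  simpa using hD.sum_le_degree {v}

lemma Effective.eq_single_of_degree_eq_one {F : G.Divisor} (hF : G.Effective F)
    (hdeg : G.degree F = 1) : ∃ w, F = Pi.single w 1 := by
  obtain ⟨w, hw⟩ : ∃ w, F w ≠ 0 := by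
    by_contra! h
    simp [degree, h] at hdeg
  have hsplit := add_sum_erase univ F (mem_univ w)
  have hrest := sum_nonneg fun v (_ : v ∈ univ.erase w) => hF v
  rw [← degree, hdeg] at hsplit
  have hFw : F w = 1 := by
    have := hF w
    omega
  have hzero := (sum_eq_zero_iff_of_nonneg fun v _ => hF v).mp (show ∑ v ∈ univ.erase w, F v = 0
    by omega)
  refine ⟨w, funext fun v => ?_⟩
  by_cases hv : v = w
  · simp [hv, hFw]
  · simpa [hv] using hzero v (mem_erase.mpr ⟨hv, mem_univ v⟩)

lemma Effective.exists_eq_zero {D : G.Divisor} (hD : G.Effective D)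
    (hdeg : G.degree D < Fintype.card G.V) : ∃ q, D q = 0 := by
  by_contra! h
  have : ∑ _v : G.V, (1 : ℤ) ≤ G.degree D :=
    sum_le_sum fun v _ => by have := hD v; have := h v; omega
  rw [sum_const, card_univ, nsmul_one] at this
  omega

namespace LinEquiv

lemma refl (D : G.Divisor) : G.LinEquiv D D :=
  ⟨0, by rw [sub_self, laplacian_zero]⟩

lemma symm {D D' : G.Divisor} (h : G.LinEquiv D D') : G.LinEquiv D' D := by
  obtain ⟨f, hf⟩ := h
  exact ⟨-f, by rw [laplacian_neg, ← hf, neg_sub]⟩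

lemma trans {D D' D'' : G.Divisor} (h : G.LinEquiv D D') (h' : G.LinEquiv D' D'') :
    G.LinEquiv D D'' := by
  obtain ⟨f, hf⟩ := h
  obtain ⟨f', hf'⟩ := h'
  exact ⟨f + f', by rw [laplacian_add, ← hf, ← hf', sub_add_sub_cancel]⟩

lemma add_right {D D' : G.Divisor} (h : G.LinEquiv D D') (C : G.Divisor) :
    G.LinEquiv (D + C) (D' + C) := by
  obtain ⟨f, hf⟩ := h
  exact ⟨f, by rw [add_sub_add_right_eq_sub, hf]⟩

lemma sub_right {D D' : G.Divisor} (h : G.LinEquiv D D') (C : G.Divisor) :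
    G.LinEquiv (D - C) (D' - C) := by
  simpa only [sub_eq_add_neg] using h.add_right (-C)

lemma degree_eq {D D' : G.Divisor} (h : G.LinEquiv D D') : G.degree D = G.degree D' := by
  obtain ⟨f, hf⟩ := h
  have := degree_sub D D'
  rw [hf, degree_laplacian] at this
  omega

end LinEquiv

end Divisors

section Rank

lemma RankGe.of_linEquiv {D D' : G.Divisor} {k : ℤ} (h : G.RankGe D k) (hDD' : G.LinEquiv D D') :
    G.RankGe D' k := fun F hF hdeg =>
  let ⟨E, hE, hDE⟩ := h F hF hdeg
  ⟨E, hE, (hDD'.sub_right F).symm.trans hDE⟩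

lemma rankGe_one_of_forall_single {D : G.Divisor}
    (h : ∀ w, ∃ E, G.Effective E ∧ G.LinEquiv (D - Pi.single w 1) E) : G.RankGe D 1 := by
  intro F hF hdeg
  obtain ⟨w, rfl⟩ := hF.eq_single_of_degree_eq_one hdeg
  exact h w

lemma rankGe_one_of_one_le {D : G.Divisor} (hD : ∀ v, 1 ≤ D v) : G.RankGe D 1 := by
  intro F hF hdeg
  refine ⟨D - F, fun v => ?_, LinEquiv.refl _⟩
  have := hF.apply_le_degree v
  have := hD v
  simp only [Pi.sub_apply]
  omega

variable [Nonempty G.V]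

lemma RankGe.mono {D : G.Divisor} {j k : ℤ} (h : G.RankGe D k) (hjk : j ≤ k) :
    G.RankGe D j := by
  intro F hF hdeg
  let P : G.Divisor := Pi.single (Classical.arbitrary G.V) (k - j)
  have hP : G.Effective P := effective_single _ (by omega)
  obtain ⟨E, hE, hDE⟩ := h (F + P) (hF.add hP) (by rw [degree_add, hdeg, degree_single]; ring)
  refine ⟨E + P, hE.add hP, ?_⟩
  simpa only [sub_add_eq_sub_sub, sub_add_cancel] using hDE.add_right P

lemma RankGe.le_degree {D : G.Divisor} {r : ℤ} (h : G.RankGe D r) (hr : 0 ≤ r) :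
    r ≤ G.degree D := by
  let q := Classical.arbitrary G.V
  obtain ⟨E, hE, hDE⟩ := h (Pi.single q r) (effective_single q hr) (degree_single q r)
  have := hDE.degree_eq
  rw [degree_sub, degree_single] at this
  linarith [hE.degree_nonneg]

lemma one_le_rank_iff {D : G.Divisor} : 1 ≤ G.rank D ↔ G.RankGe D 1 := by
  have hbdd : BddAbove {r : ℤ | r = -1 ∨ (0 ≤ r ∧ G.RankGe D r)} := by
    refine ⟨max (G.degree D) (-1), ?_⟩
    rintro r (rfl | ⟨hr, hrank⟩)
    · exact le_max_right _ _
    · exact le_max_of_le_left (hrank.le_degree hr)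
  constructor
  · intro h
    rcases Int.csSup_mem ⟨-1, Or.inl rfl⟩ hbdd with hr | ⟨_, hrank⟩
    · rw [rank, hr] at h
      omega
    · exact hrank.mono h
  · exact fun h => le_csSup hbdd (Or.inr ⟨zero_le_one, h⟩)

lemma gonality_le {D : G.Divisor} {n : ℕ} (hD : G.Effective D) (hdeg : G.degree D = n)
    (h : G.RankGe D 1) : G.gonality ≤ n :=
  Nat.sInf_le ⟨D, hD, hdeg, one_le_rank_iff.mpr h⟩

lemma gonality_le_card : G.gonality ≤ Fintype.card G.V :=
  gonality_le (fun _ => zero_le_one) degree_one (rankGe_one_of_one_le fun _ => le_rfl)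

lemma exists_rankGe_one_degree_eq_gonality :
    ∃ D, G.Effective D ∧ G.degree D = G.gonality ∧ G.RankGe D 1 := by
  obtain ⟨D, hD, hdeg, h⟩ := Nat.sInf_mem (s := {n : ℕ | ∃ D : G.Divisor, G.Effective D ∧
    G.degree D = n ∧ 1 ≤ G.rank D}) ⟨_, 1, fun _ => zero_le_one, degree_one,
      one_le_rank_iff.mpr (rankGe_one_of_one_le fun _ => le_rfl)⟩
  exact ⟨D, hD, hdeg, one_le_rank_iff.mp h⟩

end Rank

section EdgeConnectivity

def cut (A : Finset G.V) : Finset G.E := G.edgesJoining (A ×ˢ Aᶜ)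

lemma card_cut (A : Finset G.V) :
    (#(G.cut A) : ℤ) = ∑ v ∈ A, ∑ w ∈ Aᶜ, (G.numEdges v w : ℤ) := by
  rw [cut, card_edgesJoining, sum_product]
  · push_cast
    rfl
  · simp only [mem_product, mem_compl, Prod.fst_swap, Prod.snd_swap]
    tauto

/-- Write `D - q - E = Δf` with `E` effective: on the set where `f` is maximal, `Δf` sums to at
least the number of edges leaving it, and `D - q - E` to at most `deg D`. -/
lemma not_edgeConnected_of_rankGe_one {D : G.Divisor} {q : G.V} {k : ℕ} (hD : G.Effective D)
    (hq : D q = 0) (h : G.RankGe D 1) (hk : G.degree D < k) : ¬ G.EdgeConnected k := by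
  intro hconn
  obtain ⟨E, hE, f, hf⟩ := h (Pi.single q 1) (effective_single q zero_le_one) (degree_single q 1)
  obtain ⟨u, -, hu⟩ := exists_max_image univ f ⟨q, mem_univ q⟩
  set A : Finset G.V := {v | f v = f u}
  have hAu : u ∈ A := by simp [A]
  have hA : A ≠ univ := by
    intro hA
    have hconst : ∀ v, f v = f u := fun v => by
      simpa [A] using (hA ▸ mem_univ v : v ∈ A)
    have hfq := congrFun hf q
    have := hE q
    simp only [laplacian, hconst, sub_self, mul_zero, sum_const_zero, Pi.sub_apply, hq,
      Pi.single_eq_same] at hfq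
    omega
  have hcut : (#(G.cut A) : ℤ) ≤ ∑ v ∈ A, D v := by
    rw [card_cut]
    calc ∑ v ∈ A, ∑ w ∈ Aᶜ, (G.numEdges v w : ℤ)
        ≤ ∑ v ∈ A, G.laplacian f v := sum_le_sum fun v hv => by
          have hv : f v = f u := by simpa [A] using hv
          have hAc : Aᶜ = univ.filter (fun w => f w < f v) := by
            ext w
            simpa [A, hv] using (hu w (mem_univ w)).lt_iff_ne.symm
          rw [hAc]
          exact sum_numEdges_le_laplacian fun w => hv ▸ hu w (mem_univ w)
      _ = ∑ v ∈ A, (D v - (Pi.single q 1 : G.Divisor) v - E v) := by simp only [← hf, Pi.sub_apply]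
      _ ≤ ∑ v ∈ A, D v := sum_le_sum fun v _ => by
          have := effective_single q zero_le_one v
          have := hE v
          linarith
  obtain ⟨e, he, x, y, hxy, hx, hy⟩ :=
    (hconn (G.cut A) (by linarith [hD.sum_le_degree A])).2 A ⟨u, hAu⟩ hA
  exact he (by simpa [cut, edgesJoining] using ⟨x, y, ⟨hx, hy⟩, hxy⟩)

end EdgeConnectivity

section Reduced

/-- Grow `S ∋ q` one neighbour `x` at a time, replacing `g` by `M • g + 𝟙_S`: a large `M`
absorbs the chips `S` loses, and `x` receives a chip from `S`. -/
lemma Connected.exists_laplacian_le_neg_one (hG : G.Connected) (q : G.V) :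
    ∃ g : G.V → ℤ, ∀ v ≠ q, G.laplacian g v ≤ -1 := by
  suffices h : ∀ k < Fintype.card G.V, ∃ S : Finset G.V, q ∈ S ∧ #S = k + 1 ∧
      ∃ g : G.V → ℤ, (∀ v ∈ S, v ≠ q → G.laplacian g v ≤ -1) ∧ ∀ v ∉ S, G.laplacian g v ≤ 0 by
    have hcard := Fintype.card_pos_iff.mpr ⟨q⟩
    obtain ⟨S, -, hS, g, hg, -⟩ := h (Fintype.card G.V - 1) (by omega)
    have hSu : S = univ := eq_univ_of_card S (by omega)
    exact ⟨g, fun v hv => hg v (hSu ▸ mem_univ v) hv⟩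
  intro k hk
  induction k with
  | zero => exact ⟨{q}, mem_singleton_self q, rfl, 0, by simp, by simp [laplacian_zero]⟩
  | succ k ih =>
    obtain ⟨S, hqS, hS, g, hgS, hgSc⟩ := ih (by omega)
    have hSu : S ≠ univ := fun h => by rw [h, card_univ] at hS; omega
    obtain ⟨e, -, u, x, hux, hu, hx⟩ := hG.2 S ⟨q, hqS⟩ hSu
    set χ : G.V → ℤ := fun w => if w ∈ S then 1 else 0
    have hχS : ∀ v ∈ S, 0 ≤ G.laplacian χ v := fun v hv => by
      rw [laplacian_indicator_of_mem S hv]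
      positivity
    have hχSc : ∀ v ∉ S, G.laplacian χ v ≤ -∑ w ∈ S, (G.numEdges v w : ℤ) := fun v hv =>
      (laplacian_indicator_of_notMem S hv).le
    set M := ∑ v ∈ S, G.laplacian χ v + 1
    have hM : ∀ v ∈ S, G.laplacian χ v + 1 ≤ M := fun v hv => by
      simpa [M] using single_le_sum hχS hv
    have hM0 : 0 ≤ M := by linarith [sum_nonneg hχS]
    refine ⟨insert x S, mem_insert_of_mem hqS, by rw [card_insert_of_notMem hx, hS],
      M • g + χ, fun v hv hvq => ?_, fun v hv => ?_⟩
    · rw [laplacian_add, laplacian_smul, Pi.add_apply, Pi.smul_apply, smul_eq_mul]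
      rcases mem_insert.mp hv with rfl | hv
      · have hxu : (1 : ℤ) ≤ ∑ w ∈ S, (G.numEdges v w : ℤ) :=
          le_trans (by exact_mod_cast G.one_le_numEdges (hux.trans Sym2.eq_swap))
            (single_le_sum (fun w _ => by positivity) hu)
        nlinarith [hgSc v hx, hχSc v hx]
      · nlinarith [hgS v hv hvq, hM v hv]
    · rw [laplacian_add, laplacian_smul, Pi.add_apply, Pi.smul_apply, smul_eq_mul]
      have hvS : v ∉ S := fun h => hv (mem_insert_of_mem h)
      nlinarith [hgSc v hvS, hχSc v hvS, sum_nonneg fun w (_ : w ∈ S) =>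
        (Nat.cast_nonneg (G.numEdges v w) : (0 : ℤ) ≤ _)]

lemma Connected.exists_laplacian_le (hG : G.Connected) (q : G.V) (D : G.Divisor) :
    ∃ f : G.V → ℤ, ∀ v ≠ q, G.laplacian f v ≤ D v := by
  obtain ⟨g, hg⟩ := hG.exists_laplacian_le_neg_one q
  refine ⟨(∑ w, |D w|) • g, fun v hv => ?_⟩
  have hDv : |D v| ≤ ∑ w, |D w| := single_le_sum (fun w _ => abs_nonneg (D w)) (mem_univ v)
  rw [laplacian_smul, Pi.smul_apply, smul_eq_mul]
  nlinarith [hg v hv, neg_abs_le (D v), abs_nonneg (D v)]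

/-- Summing `Δf ≤ D` over the superlevel set `{f ≥ f v}`, which avoids `q`, bounds the drop of
`f` along an edge leaving it. -/
lemma Connected.exists_lt_le_add (hG : G.Connected) {q : G.V} {D : G.Divisor} {f : G.V → ℤ}
    (hf : ∀ v ≠ q, G.laplacian f v ≤ D v) {v : G.V} (hv : f q < f v) :
    ∃ w, f w < f v ∧ f v ≤ f w + ∑ x, max (D x) 0 := by
  set A : Finset G.V := {x | f v ≤ f x}
  have hqA : q ∉ A := by simpa [A] using hv
  have hA : A ≠ univ := fun h => hqA (h ▸ mem_univ q)
  obtain ⟨e, -, x, w, hxw, hx, hw⟩ := hG.2 A ⟨v, by simp [A]⟩ hA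
  have hx : f v ≤ f x := by simpa [A] using hx
  have hw : f w < f v := by simpa [A] using hw
  have hterm : ∀ x ∈ A, ∀ y ∈ Aᶜ, 0 ≤ (G.numEdges x y : ℤ) * (f x - f y) := by
    intro x hx y hy
    simp only [A, mem_compl, mem_filter, mem_univ, true_and, not_le] at hx hy
    exact mul_nonneg (by positivity) (by omega)
  refine ⟨w, hw, ?_⟩
  have hn : (1 : ℤ) ≤ G.numEdges x w := by exact_mod_cast G.one_le_numEdges hxw
  calc f v ≤ f w + (G.numEdges x w : ℤ) * (f x - f w) := by nlinarith
    _ ≤ f w + ∑ y ∈ Aᶜ, (G.numEdges x y : ℤ) * (f x - f y) := by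
      gcongr
      exact single_le_sum (hterm x (by simpa [A] using hx)) (by simpa [A] using hw)
    _ ≤ f w + ∑ x ∈ A, ∑ y ∈ Aᶜ, (G.numEdges x y : ℤ) * (f x - f y) := by
      gcongr
      exact single_le_sum (f := fun x => ∑ y ∈ Aᶜ, (G.numEdges x y : ℤ) * (f x - f y))
        (fun x hx => sum_nonneg (hterm x hx)) (by simpa [A] using hx)
    _ = f w + ∑ x ∈ A, G.laplacian f x := by rw [sum_laplacian]
    _ ≤ f w + ∑ x, max (D x) 0 := by
      gcongr
      calc ∑ x ∈ A, G.laplacian f x ≤ ∑ x ∈ A, max (D x) 0 :=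
            sum_le_sum fun x hx => (hf x (fun h => hqA (h ▸ hx))).trans (le_max_left _ _)
        _ ≤ ∑ x, max (D x) 0 :=
            sum_le_sum_of_subset_of_nonneg (subset_univ A) fun x _ _ => le_max_right _ _

lemma Connected.le_add_of_laplacian_le (hG : G.Connected) {q : G.V} {D : G.Divisor}
    {f : G.V → ℤ} (hf : ∀ v ≠ q, G.laplacian f v ≤ D v) (v : G.V) :
    f v ≤ f q + (∑ x, max (D x) 0) * Fintype.card G.V := by
  set K := ∑ x, max (D x) 0
  have hK : 0 ≤ K := sum_nonneg fun x _ => le_max_right _ _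
  suffices h : ∀ n v, #{x | f x < f v} = n → f v ≤ f q + K * n by
    refine (h _ v rfl).trans ?_
    gcongr
    exact_mod_cast card_le_univ _
  intro n
  induction n using Nat.strong_induction_on with
  | _ n ih =>
    intro v hn
    rcases le_or_gt (f v) (f q) with hv | hv
    · nlinarith
    obtain ⟨w, hwv, hvw⟩ := hG.exists_lt_le_add hf hv
    have hsub : ({x | f x < f w} : Finset G.V) ⊆ ({x | f x < f v} : Finset G.V) := by
      intro x
      simpa using fun hx => hx.trans hwv
    have hlt : #{x | f x < f w} < n := hn ▸ card_lt_card
      ((ssubset_iff_of_subset hsub).mpr ⟨w, by simpa using hwv, by simp⟩)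
    have := ih _ hlt w rfl
    have : ((#{x | f x < f w} : ℕ) : ℤ) + 1 ≤ n := by exact_mod_cast hlt
    nlinarith

/-- `D` is `q`-reduced: no nonempty set avoiding `q` can fire without a vertex going into debt. -/
def IsReduced (q : G.V) (D : G.Divisor) : Prop :=
  (∀ v ≠ q, 0 ≤ D v) ∧
    ∀ A : Finset G.V, A.Nonempty → q ∉ A → ∃ v ∈ A, D v < ∑ w ∈ Aᶜ, (G.numEdges v w : ℤ)

/-- Take `f` with `D - Δf ≥ 0` away from `q` maximising `∑ (f - f q)`: firing a set avoiding `q`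
would increase that sum. -/
lemma Connected.exists_isReduced (hG : G.Connected) (q : G.V) (D : G.Divisor) :
    ∃ D', G.LinEquiv D D' ∧ G.IsReduced q D' := by
  let P : ℤ → Prop := fun s => ∃ f : G.V → ℤ, (∀ v ≠ q, G.laplacian f v ≤ D v) ∧
    s = ∑ v, (f v - f q)
  have hbdd : ∃ b, ∀ s, P s → s ≤ b := by
    refine ⟨∑ _v : G.V, (∑ x, max (D x) 0) * Fintype.card G.V, ?_⟩
    rintro _ ⟨f, hf, rfl⟩
    exact sum_le_sum fun v _ => by linarith [hG.le_add_of_laplacian_le hf v]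
  obtain ⟨f₀, hf₀⟩ := hG.exists_laplacian_le q D
  obtain ⟨_, ⟨f, hf, rfl⟩, hmax⟩ := Int.exists_greatest_of_bdd hbdd ⟨_, f₀, hf₀, rfl⟩
  refine ⟨D - G.laplacian f, ⟨f, sub_sub_cancel _ _⟩,
    fun v hv => sub_nonneg.mpr (hf v hv), fun A hA hqA => ?_⟩
  by_contra! hfire
  set χ : G.V → ℤ := fun w => if w ∈ A then 1 else 0
  have hfχ : ∀ v ≠ q, G.laplacian (f + χ) v ≤ D v := by
    intro v hv
    rw [laplacian_add, Pi.add_apply]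
    by_cases hvA : v ∈ A
    · have := hfire v hvA
      rw [laplacian_indicator_of_mem A hvA]
      simp only [Pi.sub_apply] at this
      linarith
    · rw [laplacian_indicator_of_notMem A hvA]
      linarith [hf v hv, sum_nonneg fun w (_ : w ∈ A) =>
        (Nat.cast_nonneg (G.numEdges v w) : (0 : ℤ) ≤ _)]
  have hsum : ∑ v, ((f + χ) v - (f + χ) q) = ∑ v, (f v - f q) + #A := by
    simp only [χ, Pi.add_apply, hqA, ↓reduceIte, add_zero, sum_sub_distrib, sum_add_distrib,
      sum_ite_mem, univ_inter, sum_const, Int.nsmul_eq_mul, mul_one, card_univ]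
    ring
  have := hmax _ ⟨f + χ, hfχ, rfl⟩
  have := hA.card_pos
  omega

end Reduced

section Orientation

/-- The indegree of `v` when every edge is directed towards its end of larger `σ`-value. -/
noncomputable def indeg (σ : G.V → ℤ) : G.Divisor :=
  fun v => ∑ w ∈ univ.filter (fun w => σ w < σ v), (G.numEdges v w : ℤ)

lemma indeg_eq_zero {σ : G.V → ℤ} {q : G.V} (hq : ∀ v ≠ q, σ q < σ v) : G.indeg σ q = 0 :=
  sum_eq_zero fun v hv => by
    have hv : σ v < σ q := by simpa using hv
    exact absurd (hq v (fun h => (h ▸ hv).false)) hv.asymm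

lemma sum_indeg {σ : G.V → ℤ} (hσ : Function.Injective σ) :
    ∑ v, G.indeg σ v = Fintype.card G.E := by
  set P : Finset (G.V × G.V) := univ.filter fun p => σ p.2 < σ p.1
  have hall : G.edgesJoining P = univ := by
    refine eq_univ_of_forall fun e => ?_
    induction he : G.ends e using Sym2.ind generalizing e with
    | _ a b =>
      have hab : σ a ≠ σ b := hσ.ne (G.ne_of_ends_eq he)
      simp only [edgesJoining, mem_filter, mem_univ, true_and]
      rcases hab.lt_or_gt with h | h
      · exact ⟨(b, a), by simpa [P] using h, he.trans Sym2.eq_swap⟩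
      · exact ⟨(a, b), by simpa [P] using h, he⟩
  have hcard := G.card_edgesJoining (P := P) fun p hp => by
    simp only [P, mem_filter, mem_univ, true_and, Prod.fst_swap, Prod.snd_swap] at hp ⊢
    exact hp.asymm
  rw [hall, card_univ] at hcard
  rw [hcard, sum_filter, Fintype.sum_prod_type]
  push_cast
  simp only [indeg, sum_filter]

lemma indeg_add_indeg_neg {σ : G.V → ℤ} (hσ : Function.Injective σ) (v : G.V) :
    G.indeg σ v + G.indeg (-σ) v = ∑ w, (G.numEdges v w : ℤ) := by
  simp only [indeg, Pi.neg_apply, neg_lt_neg_iff, sum_filter, ← sum_add_distrib]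
  refine sum_congr rfl fun w _ => ?_
  rcases lt_trichotomy (σ w) (σ v) with h | h | h
  · simp [h, h.not_gt]
  · simp [hσ h, G.numEdges_self]
  · simp [h, h.not_gt]

/-- The canonical divisor `K(v) = val(v) - 2`. -/
noncomputable def canonical : G.Divisor := fun v => ∑ w, (G.numEdges v w : ℤ) - 2

lemma degree_canonical : G.degree G.canonical = 2 * G.genus - 2 := by
  set σ : G.V → ℤ := fun v => (Fintype.equivFin G.V v : ℤ)
  have hσ : Function.Injective σ := fun v w h =>
    (Fintype.equivFin G.V).injective (Fin.ext (by simpa [σ] using h))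
  have hsum := sum_indeg hσ
  have hsum' := sum_indeg (G := G) (σ := -σ) fun v w h => hσ (neg_injective h)
  simp only [degree, canonical, genus, sum_sub_distrib, ← indeg_add_indeg_neg hσ,
    sum_add_distrib] at hsum' ⊢
  simp only [sum_const, card_univ, nsmul_eq_mul]
  rw [hsum, hsum']
  ring

/-- If `indeg σ - 1 - E = Δf`, let `u` be the `σ`-least vertex where `f` is maximal: every edge
directed into `u` comes from a smaller value of `f`, so `Δf u ≥ indeg σ u`. -/
lemma not_linEquiv_indeg_sub_one [Nonempty G.V] (σ : G.V → ℤ) {E : G.Divisor}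
    (hE : G.Effective E) : ¬ G.LinEquiv (G.indeg σ - 1) E := by
  rintro ⟨f, hf⟩
  obtain ⟨v, -, hv⟩ := exists_max_image univ f univ_nonempty
  set A : Finset G.V := {x | f x = f v}
  obtain ⟨u, huA, hu⟩ := exists_min_image A σ ⟨v, by simp [A]⟩
  have huv : f u = f v := by simpa [A] using huA
  have hle : G.indeg σ u ≤ ∑ w ∈ univ.filter (fun w => f w < f u), (G.numEdges u w : ℤ) := by
    refine sum_le_sum_of_subset_of_nonneg (fun w => ?_) fun _ _ _ => by positivity
    simp only [mem_filter, mem_univ, true_and]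
    intro hw
    rw [huv]
    refine (hv w (mem_univ w)).lt_of_ne fun h => ?_
    exact hw.not_ge (hu w (by simp [A, h]))
  have := sum_numEdges_le_laplacian (f := f) (u := u) fun w => huv ▸ hv w (mem_univ w)
  have hfu := congrFun hf u
  simp only [Pi.sub_apply, Pi.one_apply] at hfu
  linarith [hE u]

end Orientation

section Riemann

/-- Dhar's burning algorithm: the vertices of `A` burn one at a time, each having fewer chips
than edges towards the vertices burnt before it, which include those outside `A`. -/
lemma IsReduced.exists_burning_order {q : G.V} {D : G.Divisor} (hD : G.IsReduced q D)
    (A : Finset G.V) (hqA : q ∉ A) :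
    ∃ σ : G.V → ℤ, (∀ v ∉ A, σ v = 0) ∧ (∀ v ∈ A, 0 < σ v) ∧ Set.InjOn σ A ∧
      ∀ v ∈ A, D v < G.indeg σ v := by
  induction A using Finset.strongInduction with
  | H A ih =>
  rcases A.eq_empty_or_nonempty with rfl | hA
  · exact ⟨0, fun _ _ => rfl, by simp, by simp, by simp⟩
  obtain ⟨u, hu, hDu⟩ := hD.2 A hA hqA
  obtain ⟨σ, hσ0, hσpos, hσinj, hσD⟩ :=
    ih (A.erase u) (erase_ssubset hu) fun h => hqA (mem_of_mem_erase h)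
  have hσu : σ u = 0 := hσ0 u (notMem_erase u A)
  have hσA : ∀ v ∈ A, v ≠ u → 0 < σ v := fun v hv hvu => hσpos v (mem_erase.mpr ⟨hvu, hv⟩)
  set τ : G.V → ℤ := σ + fun w => if w ∈ A then 1 else 0
  have hτA : ∀ w ∈ A, τ w = σ w + 1 := fun w hw => by simp [τ, hw]
  have hτAc : ∀ w ∉ A, τ w = 0 := fun w hw => by
    simp [τ, hw, hσ0 w fun h => hw (mem_of_mem_erase h)]
  have hindeg : ∀ v ∈ A, ∀ s : Finset G.V, (∀ w ∈ s, τ w < τ v) →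
      ∑ w ∈ s, (G.numEdges v w : ℤ) ≤ G.indeg τ v := fun v _ s hs =>
    sum_le_sum_of_subset_of_nonneg (fun w hw => by simpa using hs w hw)
      fun _ _ _ => by positivity
  refine ⟨τ, hτAc, fun v hv => ?_, fun v hv w hw h => ?_, fun v hv => ?_⟩
  · rcases eq_or_ne v u with rfl | hvu
    · linarith [hτA v hv]
    · linarith [hτA v hv, hσA v hv hvu]
  · rw [hτA v hv, hτA w hw, add_left_inj] at h
    rcases eq_or_ne v u with rfl | hvu
    · by_contra hvw
      linarith [hσA w hw (Ne.symm hvw)]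
    rcases eq_or_ne w u with rfl | hwu
    · linarith [hσA v hv hvu]
    exact hσinj (mem_erase.mpr ⟨hvu, hv⟩) (mem_erase.mpr ⟨hwu, hw⟩) h
  rcases eq_or_ne v u with rfl | hvu
  · refine hDu.trans_le (hindeg v hv _ fun w hw => ?_)
    rw [hτAc w (mem_compl.mp hw), hτA v hv, hσu]
    exact one_pos
  · refine (hσD v (mem_erase.mpr ⟨hvu, hv⟩)).trans_le (hindeg v hv _ fun w hw => ?_)
    simp only [mem_filter, mem_univ, true_and] at hw
    by_cases hwA : w ∈ A
    · linarith [hτA w hwA, hτA v hv]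
    · linarith [hτAc w hwA, hτA v hv, hσA v hv hvu]

lemma IsReduced.exists_order {q : G.V} {D : G.Divisor} (hD : G.IsReduced q D) :
    ∃ σ : G.V → ℤ, Function.Injective σ ∧ (∀ v ≠ q, σ q < σ v) ∧
      ∀ v ≠ q, D v < G.indeg σ v := by
  obtain ⟨σ, hσ0, hσpos, hσinj, hσD⟩ := hD.exists_burning_order _ (notMem_erase q univ)
  have hA : ∀ v ≠ q, v ∈ univ.erase q := fun v hv => mem_erase.mpr ⟨hv, mem_univ v⟩
  have hσq : σ q = 0 := hσ0 q (notMem_erase q univ)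
  refine ⟨σ, fun v w h => ?_, fun v hv => hσq ▸ hσpos v (hA v hv), fun v hv => hσD v (hA v hv)⟩
  by_cases hv : v = q <;> by_cases hw : w = q
  · rw [hv, hw]
  · linarith [hσpos w (hA w hw), hv ▸ hσq]
  · linarith [hσpos v (hA v hv), hw ▸ hσq]
  · exact hσinj (hA v hv) (hA w hw) h

lemma sum_erase_indeg_sub_one {σ : G.V → ℤ} (hσ : Function.Injective σ) {q : G.V}
    (hq : ∀ v ≠ q, σ q < σ v) : ∑ v ∈ univ.erase q, (G.indeg σ v - 1) = G.genus := by
  have hsplit := add_sum_erase univ (G.indeg σ) (mem_univ q)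
  rw [sum_indeg hσ, indeg_eq_zero hq, zero_add] at hsplit
  rw [sum_sub_distrib, hsplit, sum_const, card_erase_of_mem (mem_univ q), card_univ,
    nsmul_eq_mul, mul_one, Nat.cast_sub (Fintype.card_pos_iff.mpr ⟨q⟩), genus]
  ring

/-- Riemann's inequality: away from `q`, a `q`-reduced divisor has at most `g` chips. -/
theorem Connected.exists_effective_linEquiv (hG : G.Connected) {D : G.Divisor}
    (hD : G.genus ≤ G.degree D) : ∃ E, G.Effective E ∧ G.LinEquiv D E := by
  obtain ⟨q⟩ := hG.1
  obtain ⟨D', hDD', hred⟩ := hG.exists_isReduced q D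
  obtain ⟨σ, hσ, hq, hlt⟩ := hred.exists_order
  have hsum : ∑ v ∈ univ.erase q, D' v ≤ G.genus := by
    rw [← sum_erase_indeg_sub_one hσ hq]
    exact sum_le_sum fun v hv => by linarith [hlt v (ne_of_mem_erase hv)]
  have hsplit := add_sum_erase univ D' (mem_univ q)
  refine ⟨D', fun v => ?_, hDD'⟩
  by_cases hv : v = q
  · rw [hDD'.degree_eq, degree] at hD
    rw [hv]
    linarith
  · exact hred.1 v hv

lemma linEquiv_indeg_neg_sub_one {σ : G.V → ℤ} (hσ : Function.Injective σ) {q : G.V}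
    (hq : ∀ v ≠ q, σ q < σ v) {D : G.Divisor} (hKD : G.LinEquiv G.canonical D)
    (hD : ∀ v ≠ q, D v = G.indeg σ v - 1) (hDq : D q = 0) :
    G.LinEquiv (G.indeg (-σ) - 1) (Pi.single q 1) := by
  obtain ⟨f, hf⟩ := hKD
  refine ⟨f, ?_⟩
  rw [← hf]
  ext v
  have hK := indeg_add_indeg_neg hσ v
  simp only [canonical, Pi.sub_apply, Pi.one_apply] at hK ⊢
  rcases eq_or_ne v q with rfl | hv
  · have := indeg_eq_zero hq
    simp only [Pi.single_eq_same]
    omega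
  · rw [hD v hv, Pi.single_eq_of_ne hv]
    omega

/-- In genus `2` the reduced representative `D` of `K` at `q` has a chip at `q` unless
`D = indeg σ - 1 + q` exactly; but then `K - D = indeg (-σ) - 1 - q`, so the divisor of the
reversed acyclic orientation would be equivalent to the effective divisor `q`. -/
lemma Connected.exists_effective_linEquiv_canonical_sub_single (hG : G.Connected)
    (hg : G.genus = 2) (q : G.V) :
    ∃ E, G.Effective E ∧ G.LinEquiv (G.canonical - Pi.single q 1) E := by
  obtain ⟨D, hKD, hred⟩ := hG.exists_isReduced q G.canonical
  obtain ⟨σ, hσ, hq, hlt⟩ := hred.exists_order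
  have hle : ∀ v ∈ univ.erase q, D v ≤ G.indeg σ v - 1 := fun v hv => by
    linarith [hlt v (ne_of_mem_erase hv)]
  have hsum := sum_le_sum hle
  rw [sum_erase_indeg_sub_one hσ hq, hg] at hsum
  have hdeg : G.degree D = 2 := by rw [← hKD.degree_eq, degree_canonical, hg]; norm_num
  have hsplit := add_sum_erase univ D (mem_univ q)
  rw [← degree, hdeg] at hsplit
  by_cases hDq : 1 ≤ D q
  · refine ⟨D - Pi.single q 1, fun v => ?_, hKD.sub_right _⟩
    by_cases hv : v = q
    · simp [hv, hDq]
    · simpa [hv] using hred.1 v hv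
  exfalso
  have : Nonempty G.V := ⟨q⟩
  have heq : ∀ v ∈ univ.erase q, D v = G.indeg σ v - 1 := by
    rw [← sum_eq_sum_iff_of_le hle, sum_erase_indeg_sub_one hσ hq, hg]
    omega
  exact not_linEquiv_indeg_sub_one (-σ) (effective_single q zero_le_one)
    (linEquiv_indeg_neg_sub_one hσ hq hKD (fun v hv => heq v (mem_erase.mpr ⟨hv, mem_univ v⟩))
      (by omega))

lemma Connected.exists_rankGe_one_of_genus_le_two (hG : G.Connected) (hg : G.genus ≤ 2) :
    ∃ D, G.Effective D ∧ G.degree D = 2 ∧ G.RankGe D 1 := by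
  obtain ⟨q⟩ := hG.1
  rcases hg.lt_or_eq with hg | hg
  · refine ⟨Pi.single q 2, effective_single q zero_le_two, degree_single q 2,
      fun F _ hF => hG.exists_effective_linEquiv ?_⟩
    rw [degree_sub, degree_single, hF]
    omega
  obtain ⟨E, hE, hKE⟩ := hG.exists_effective_linEquiv_canonical_sub_single hg q
  have hKD : G.LinEquiv G.canonical (E + Pi.single q 1) := by
    simpa using hKE.add_right (Pi.single q 1)
  refine ⟨E + Pi.single q 1, hE.add (effective_single q zero_le_one), ?_,
    (rankGe_one_of_forall_single
      (hG.exists_effective_linEquiv_canonical_sub_single hg)).of_linEquiv hKD⟩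
  rw [← hKD.degree_eq, degree_canonical, hg]
  norm_num

end Riemann

end Multigraph

/-- If `G` is a graph of gonality 3, then `g(G) ≥ 3`, and either
`η(G) ≤ 3` (that is, `G` is not 4-edge-connected) or `|V(G)| = 3`. -/
theorem stmt_1 (G : Multigraph) (hG : G.Connected) (h : G.gonality = 3) :
    3 ≤ G.genus ∧ (¬ G.EdgeConnected 4 ∨ Fintype.card G.V = 3) := by
  have : Nonempty G.V := hG.1
  constructor
  · by_contra! hg
    obtain ⟨D, hD, hdeg, hrank⟩ := hG.exists_rankGe_one_of_genus_le_two (by omega)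
    have := Multigraph.gonality_le (n := 2) hD hdeg hrank
    omega
  · refine or_iff_not_imp_right.mpr fun hV => ?_
    have hV : 4 ≤ Fintype.card G.V := by
      have := G.gonality_le_card
      omega
    obtain ⟨D, hD, hdeg, hrank⟩ := G.exists_rankGe_one_degree_eq_gonality
    obtain ⟨q, hq⟩ := hD.exists_eq_zero (by rw [hdeg, h]; exact_mod_cast hV)
    exact Multigraph.not_edgeConnected_of_rankGe_one hD hq hrank (by rw [hdeg, h]; norm_num)
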